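/- The sets F_{I_1}^•, …, F_{I_m}^• satisfy the overlapping condition: for any k, l ∈ {1,…,m}, if cl(F_{I_k}^•) ∩ cl(F_{I_l}^•) ≠ ∅, then I_k ⊆ I_l or I_l ⊆ I_k. -/
import Mathlib


/-- Lemma 6.5 (overlapping part): the shrunk footprints `F_{I_k}^•` defined by
`F_{I_k}^• = (⋂_{i ∈ I_k} F_{i,k}) \ (⋃_{i ∉ I_k} cl(G_{i,k}))` satisfy the overlapping
condition: if `cl(F_{I_k}^•) ∩ cl(F_{I_l}^•) ≠ ∅` then `I_k ⊆ I_l` or `I_l ⊆ I_k`. -/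
theorem shrunk_footprints_overlapping
    {X : Type*} [TopologicalSpace X]
    (N m : ℕ) (hN : 0 < N) (hm : 0 < m)
    (F F' : Fin N → Set X)
    (hFopen : ∀ i, IsOpen (F i)) (hF'open : ∀ i, IsOpen (F' i))
    (hcover : (⋃ i, F' i) = Set.univ)
    (I : Fin m → Finset (Fin N))
    (hIinj : Function.Injective I)
    (hIenum : ∀ J : Finset (Fin N),
      (J.Nonempty ∧ (⋂ i ∈ J, closure (F i)).Nonempty) ↔ ∃ k : Fin m, I k = J)
    (hIorder : ∀ k l : Fin m, I k ⊆ I l → k ≤ l)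
    (G F₂ : Fin N → ℕ → Set X)
    (hGopen : ∀ i, ∀ k < m, IsOpen (G i k))
    (hF₂open : ∀ i, ∀ k < m, IsOpen (F₂ i k))
    (hF'G : ∀ i, F' i ⊆ G i 0)
    (hGF₂ : ∀ i, ∀ k < m, closure (G i k) ⊆ F₂ i k)
    (hF₂G : ∀ i, ∀ k, k + 1 < m → closure (F₂ i k) ⊆ G i (k + 1))
    (hF₂F : ∀ i, F₂ i (m - 1) ⊆ F i)
    (Fb : Fin m → Set X)
    (hFb : ∀ k : Fin m,
      Fb k = (⋂ i ∈ I k, F₂ i (k : ℕ)) \ (⋃ i ∈ {i : Fin N | i ∉ I k}, closure (G i (k : ℕ)))) :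
    ∀ k l : Fin m, (closure (Fb k) ∩ closure (Fb l)).Nonempty → I k ⊆ I l ∨ I l ⊆ I k := by

  -- chain lemma: closures propagate forward
  have chain : ∀ i : Fin N, ∀ k l : ℕ, k < l → l < m → closure (F₂ i k) ⊆ G i l := by
    intro i k l hkl hlm
    induction l with
    | zero => omega
    | succ l ih =>
      rcases Nat.lt_succ_iff_lt_or_eq.mp hkl with h | h
      · have h1 : G i l ⊆ G i (l + 1) :=
          subset_closure.trans ((hGF₂ i l (by omega)).trans
            (subset_closure.trans (hF₂G i l (by omega))))
        exact (ih h (by omega)).trans h1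
      · subst h
        exact hF₂G i k hlm
  have key : ∀ k l : Fin m, k < l → (closure (Fb k) ∩ closure (Fb l)).Nonempty → I k ⊆ I l := by
    intro k l hkl ⟨x, hxk, hxl⟩ i hik
    by_contra hil
    -- Fb k ⊆ F₂ i k
    have h1 : Fb k ⊆ F₂ i (k : ℕ) := by
      rw [hFb k]
      intro y hy
      exact Set.mem_iInter₂.mp hy.1 i hik
    have hx1 : x ∈ G i (l : ℕ) :=
      (closure_mono h1).trans (chain i k l (Fin.lt_def.mp hkl) l.isLt) hxk
    -- Fb l disjoint from G i l
    have h2 : Fb l ⊆ (G i (l : ℕ))ᶜ := by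
      rw [hFb l]
      intro y hy hyG
      exact hy.2 (Set.mem_biUnion hil (subset_closure hyG))
    have h3 : closure (Fb l) ⊆ (G i (l : ℕ))ᶜ := by
      have := closure_mono h2
      rwa [(isClosed_compl_iff.mpr (hGopen i l l.isLt)).closure_eq] at this
    exact h3 hxl hx1
  intro k l hne
  rcases lt_trichotomy k l with h | h | h
  · exact Or.inl (key k l h hne)
  · exact Or.inl (h ▸ subset_rfl)
  · exact Or.inr (key l k h ⟨hne.choose, hne.choose_spec.2, hne.choose_spec.1⟩)
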